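/- arXiv:math/0602332 — 2 statements merged into one kernel-verified Lean document; each statement's English description precedes it below -/
import Mathlib

section
/- Let q(z) = 1 - z and, for τ ∈ Δ, define q_τ(z) = conj(τ)·(1 - z) + |1 - τ|²/(1 - z) on the open unit disk. Then Re q_τ(z) > 0 for all z ∈ Δ, q_τ(τ) = conj(τ)(1-τ) + |1-τ|²/(1-τ), and q_τ converges to q uniformly on compact subsets of Δ as τ → 1. -/
open Complex Metric

theorem stmt9 (q : ℂ → ℂ) (hq : ∀ z, q z = 1 - z)
    (Q : ℂ → ℂ → ℂ)
    (hQ : ∀ τ z, Q τ z = (starRingEnd ℂ) τ * (1 - z) + (‖1 - τ‖ : ℂ)^2 / (1 - z)) :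
    (∀ τ ∈ ball (0:ℂ) 1, ∀ z ∈ ball (0:ℂ) 1, 0 < (Q τ z).re) ∧
    (∀ τ ∈ ball (0:ℂ) 1, Q τ τ = (starRingEnd ℂ) τ * (1 - τ) + (‖1 - τ‖ : ℂ)^2 / (1 - τ)) ∧
    (∀ K ⊆ ball (0:ℂ) 1, IsCompact K → ∀ ε > (0:ℝ), ∃ δ > (0:ℝ),
      ∀ τ ∈ ball (0:ℂ) 1, ‖τ - 1‖ < δ →
        ∀ z ∈ K, ‖Q τ z - q z‖ < ε) := by
  refine ⟨?_, ?_, ?_⟩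
  · -- positivity of the real part
    intro τ hτ z hz
    rw [mem_ball, dist_zero_right] at hτ hz
    set w : ℂ := 1 - z with hwdef
    set a : ℂ := 1 - τ with hadef
    have ha0 : a ≠ 0 := by
      rw [hadef, sub_ne_zero]
      intro h
      rw [← h] at hτ
      simp at hτ
    have hw0 : w ≠ 0 := by
      rw [hwdef, sub_ne_zero]
      intro h
      rw [← h] at hz
      simp at hz
    set A := ‖a‖ with hAdef
    set W := ‖w‖ with hWdef
    have hA : 0 < A := norm_pos_iff.mpr ha0
    have hW : 0 < W := norm_pos_iff.mpr hw0
    have ht : 0 < w.re := by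
      have : z.re ≤ ‖z‖ := Complex.re_le_norm z
      have hwre : w.re = 1 - z.re := by simp [hwdef]
      linarith
    have hns : Complex.normSq w = W ^ 2 := (Complex.sq_norm w).symm
    have h2t : 0 < 2 * w.re - W ^ 2 := by
      have h1 : W ^ 2 = Complex.normSq w := (Complex.sq_norm w)
      have h2 : Complex.normSq z = ‖z‖ ^ 2 := (Complex.sq_norm z).symm
      have h3 : ‖z‖ ^ 2 < 1 := by
        nlinarith [norm_nonneg z]
      have h4 : Complex.normSq w = 1 - 2 * z.re + Complex.normSq z := by
        simp [hwdef, Complex.normSq_apply, Complex.sub_re, Complex.sub_im]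
        ring
      have hwre : w.re = 1 - z.re := by simp [hwdef]
      rw [h1, h4, hwre]
      linarith [h2 ▸ h3]
    have hre : (Q τ z).re = w.re - ((starRingEnd ℂ) a * w).re + A ^ 2 * w.re / W ^ 2 := by
      rw [hQ]
      have hsplit : (starRingEnd ℂ) τ * (1 - z) = w - (starRingEnd ℂ) a * w := by
        rw [hadef, hwdef, map_sub, map_one]
        ring
      have hc : ((‖1 - τ‖ : ℂ))^2 = ((A ^ 2 : ℝ) : ℂ) := by
        rw [hAdef, hadef]
        push_cast
        ring
      rw [hsplit, hc, Complex.add_re, Complex.sub_re, Complex.div_re]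
      simp only [hns, Complex.ofReal_re, Complex.ofReal_im, zero_mul, zero_div, add_zero,
        hwdef, Complex.sub_re, Complex.one_re]
      rw [← hwdef, hns]
    rw [hre]
    have hle : ((starRingEnd ℂ) a * w).re ≤ A * W := by
      calc ((starRingEnd ℂ) a * w).re ≤ ‖(starRingEnd ℂ) a * w‖ :=
            Complex.re_le_norm _
        _ = A * W := by rw [norm_mul, Complex.norm_conj]
    have hW2 : (0:ℝ) < W ^ 2 := by positivity
    have hD : A ^ 2 * w.re / W ^ 2 * W ^ 2 = A ^ 2 * w.re := by
      field_simp
    nlinarith [mul_pos (mul_pos hA hW) h2t, mul_nonneg ht.le (sq_nonneg (W - A)),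
      mul_le_mul_of_nonneg_right hle hW2.le, hD]
  · -- value at τ
    intro τ _
    rw [hQ]
  · -- local uniform convergence
    intro K hK hKc ε hε
    rcases K.eq_empty_or_nonempty with hKe | hKne
    · exact ⟨1, one_pos, fun τ _ _ z hz => by simp [hKe] at hz⟩
    · obtain ⟨z0, hz0, hmax⟩ := hKc.exists_isMaxOn hKne continuous_norm.continuousOn
      set r := ‖z0‖ with hrdef
      have hr1 : r < 1 := by
        have := hK hz0
        rwa [mem_ball, dist_zero_right] at this
      have hr0 : 0 ≤ r := norm_nonneg _
      set C : ℝ := 2 + 1 / (1 - r) with hCdef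
      have hC : 0 < C := by
        have : 0 < 1 - r := by linarith
        positivity
      refine ⟨min 1 (ε / C), by positivity, ?_⟩
      intro τ hτ hτδ z hz
      have hzr : ‖z‖ ≤ r := hmax hz
      set s := ‖τ - 1‖ with hsdef
      have hs0 : 0 ≤ s := norm_nonneg _
      have hs1 : s < 1 := lt_of_lt_of_le hτδ (min_le_left _ _)
      have hsε : s < ε / C := lt_of_lt_of_le hτδ (min_le_right _ _)
      have hz1 : (1:ℂ) - z ≠ 0 := by
        rw [sub_ne_zero]
        intro h
        rw [← h] at hzr
        simp at hzr
        linarith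
      have hlo : 1 - r ≤ ‖1 - z‖ := by
        have := norm_sub_norm_le (1:ℂ) z
        simp only [norm_one] at this
        linarith
      have hhi : ‖1 - z‖ ≤ 1 + r := by
        have := norm_sub_le (1:ℂ) z
        simp only [norm_one] at this
        linarith
      have hid : Q τ z - q z =
          ((starRingEnd ℂ) τ - 1) * (1 - z) + (‖1 - τ‖ : ℂ)^2 / (1 - z) := by
        rw [hQ, hq]
        ring
      have habs1 : ‖(starRingEnd ℂ) τ - 1‖ = s := by
        rw [hsdef, show (starRingEnd ℂ) τ - 1 = (starRingEnd ℂ) (τ - 1) by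
          rw [map_sub, map_one], Complex.norm_conj]
      have habs2 : ‖(‖1 - τ‖ : ℂ)^2‖ = s ^ 2 := by
        rw [norm_pow, Complex.norm_real, Real.norm_eq_abs, _root_.abs_of_nonneg (norm_nonneg _),
          norm_sub_rev, hsdef]
      have hbound : ‖Q τ z - q z‖ ≤ s * (1 + r) + s ^ 2 / (1 - r) := by
        rw [hid]
        calc ‖((starRingEnd ℂ) τ - 1) * (1 - z) +
              (‖1 - τ‖ : ℂ)^2 / (1 - z)‖
            ≤ ‖((starRingEnd ℂ) τ - 1) * (1 - z)‖ +
              ‖(‖1 - τ‖ : ℂ)^2 / (1 - z)‖ :=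
              norm_add_le _ _
          _ = s * ‖1 - z‖ + s ^ 2 / ‖1 - z‖ := by
              rw [norm_mul, norm_div, habs1, habs2]
          _ ≤ s * (1 + r) + s ^ 2 / (1 - r) := by
              have h1 : s * ‖1 - z‖ ≤ s * (1 + r) :=
                mul_le_mul_of_nonneg_left hhi hs0
              have h2 : s ^ 2 / ‖1 - z‖ ≤ s ^ 2 / (1 - r) :=
                div_le_div_of_nonneg_left (by positivity) (by linarith) hlo
              linarith
      have hfinal : s * (1 + r) + s ^ 2 / (1 - r) < ε := by
        have h1r : 0 < 1 - r := by linarith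
        have hs2 : s ^ 2 ≤ s := by nlinarith
        have hCs : s * C < ε := by
          have := (lt_div_iff₀ hC).mp hsε
          linarith
        have key : s * (1 + r) + s ^ 2 / (1 - r) ≤ s * C := by
          have e1 : s * C = 2 * s + s / (1 - r) := by
            rw [hCdef]
            field_simp
          have e2 : s * (1 + r) ≤ 2 * s := by nlinarith
          have e3 : s ^ 2 / (1 - r) ≤ s / (1 - r) := (div_le_div_iff_of_pos_right h1r).mpr hs2
          linarith
        exact lt_of_le_of_lt key hCs
      linarith
end

section
/- Let f be holomorphic on the open unit disk Δ and suppose F : ℝ≥0 × Δ → Δ satisfies the flow equation ∂F/∂t(t,z) + f(F(t,z)) = 0 and F(0,z) = z. Let h be holomorphic on Δ and λ ∈ ℂ satisfy λ·h(z) = h'(z)·f(z) on Δ. Then for every t ≥ 0 and z ∈ Δ, h(F(t,z)) = e^{-λ t}·h(z). -/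
open Complex Metric

/-!
Along a trajectory, `u s = h (F s z)` satisfies `u' = h'(F) · (-f(F)) = -λ u` by the chain rule and
`λ h = h' f`. Solutions of the scalar linear ODE `u' = c u` are `e^{c s} u 0`, because
`e^{-c s} u s` has zero derivative.
-/

theorem eq_exp_mul_smul_of_hasDerivAt {E : Type*} [NormedAddCommGroup E] [NormedSpace ℂ E]
    {g : ℝ → E} {c : ℂ} (hg : ∀ s : ℝ, 0 ≤ s → HasDerivAt g (c • g s) s)
    {t : ℝ} (ht : 0 ≤ t) : g t = exp (c * t) • g 0 := by
  set φ : ℝ → E := fun s => exp (-(c * s)) • g s with hφ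
  have hφ' : ∀ s : ℝ, 0 ≤ s → HasDerivAt φ 0 s := by
    intro s hs
    have hexp : HasDerivAt (fun u : ℝ => exp (-(c * u))) (exp (-(c * s)) * -c) s := by
      simpa using (((ofRealCLM.hasDerivAt (x := s)).const_mul c).neg).cexp
    refine (hexp.smul (hg s hs)).congr_deriv ?_
    rw [smul_smul, ← add_smul, mul_neg, add_neg_cancel, zero_smul]
  have hconst : φ t = φ 0 :=
    constant_of_has_deriv_right_zero
      (fun s hs => (hφ' s hs.1).continuousAt.continuousWithinAt)
      (fun s hs => (hφ' s hs.1).hasDerivWithinAt) t (Set.right_mem_Icc.2 ht)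
  simpa [hφ, smul_smul, ← exp_add] using congrArg (exp (c * t) • ·) hconst

theorem stmt11_general (f : ℂ → ℂ)
    (F : ℝ → ℂ → ℂ)
    (hmaps : ∀ t : ℝ, 0 ≤ t → ∀ z ∈ ball (0:ℂ) 1, F t z ∈ ball (0:ℂ) 1)
    (hflow : ∀ t : ℝ, 0 ≤ t → ∀ z ∈ ball (0:ℂ) 1,
      HasDerivAt (fun s : ℝ => F s z) (-(f (F t z))) t)
    (hinit : ∀ z ∈ ball (0:ℂ) 1, F 0 z = z)
    (h : ℂ → ℂ) (hh : DifferentiableOn ℂ h (ball (0:ℂ) 1))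
    (lam : ℂ) (heq : ∀ z ∈ ball (0:ℂ) 1, lam * h z = deriv h z * f z) :
    ∀ t : ℝ, 0 ≤ t → ∀ z ∈ ball (0:ℂ) 1,
      h (F t z) = Complex.exp (-lam * t) * h z := by
  intro t ht z hz
  have hode : ∀ s : ℝ, 0 ≤ s → HasDerivAt (fun u => h (F u z)) (-lam • h (F s z)) s := by
    intro s hs
    have hFs := hmaps s hs z hz
    have hhF : HasDerivAt h (deriv h (F s z)) (F s z) :=
      (hh.differentiableAt (isOpen_ball.mem_nhds hFs)).hasDerivAt
    refine (hhF.comp s (hflow s hs z hz)).congr_deriv ?_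
    rw [smul_eq_mul, neg_mul, heq _ hFs, mul_neg]
  simpa [hinit z hz] using eq_exp_mul_smul_of_hasDerivAt hode ht

theorem stmt11 (f : ℂ → ℂ) (hf : DifferentiableOn ℂ f (ball (0:ℂ) 1))
    (F : ℝ → ℂ → ℂ)
    (hmaps : ∀ t : ℝ, 0 ≤ t → ∀ z ∈ ball (0:ℂ) 1, F t z ∈ ball (0:ℂ) 1)
    (hflow : ∀ t : ℝ, 0 ≤ t → ∀ z ∈ ball (0:ℂ) 1,
      HasDerivAt (fun s : ℝ => F s z) (-(f (F t z))) t)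
    (hinit : ∀ z ∈ ball (0:ℂ) 1, F 0 z = z)
    (h : ℂ → ℂ) (hh : DifferentiableOn ℂ h (ball (0:ℂ) 1))
    (lam : ℂ) (heq : ∀ z ∈ ball (0:ℂ) 1, lam * h z = deriv h z * f z) :
    ∀ t : ℝ, 0 ≤ t → ∀ z ∈ ball (0:ℂ) 1,
      h (F t z) = Complex.exp (-lam * t) * h z :=
  stmt11_general f F hmaps hflow hinit h hh lam heq
end
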